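/- arXiv:2101.12518 — 3 statements merged into one kernel-verified Lean document; each statement's English description precedes it below -/
import Mathlib

section
/- Let K be a compact Hausdorff topological space with no isolated point, let f₁,…,fₙ be norm-one elements of C(K) (real-valued continuous functions on K with the supremum norm), and let A ⊆ K be a nonempty open subset. Then there exist norm-one g₁,…,gₙ ∈ C(K) such that (1) gᵢ = fᵢ on K ∖ A for every i, and (2) ‖Σᵢ₌₁ⁿ λᵢ gᵢ‖ = Σᵢ₌₁ⁿ |λᵢ| for all real scalars λ₁,…,λₙ. -/
open Filter Topology

private lemma telescope_aux (a : ℕ → ℝ) :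
    ∀ m, ∑ j ∈ Finset.range m, a j * ∏ k ∈ Finset.range j, (1 - a k)
      = 1 - ∏ j ∈ Finset.range m, (1 - a j) := by
  intro m
  induction m with
  | zero => simp
  | succ m ih =>
    rw [Finset.sum_range_succ, Finset.prod_range_succ, ih]; ring

/-- Let `K` be a compact Hausdorff space with no isolated points, `f₁,…,fₙ` norm-one elements
of `C(K)` and `A ⊆ K` a nonempty open set. Then there are norm-one `g₁,…,gₙ ∈ C(K)` agreeing
with the `fᵢ` outside `A` and isometrically equivalent to the canonical basis of `ℓ₁ⁿ`. -/
theorem stmt_6 {K : Type*} [TopologicalSpace K] [CompactSpace K] [T2Space K]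
    (hK : ∀ t : K, ¬ IsOpen ({t} : Set K))
    (n : ℕ) (f : Fin n → C(K, ℝ)) (hf : ∀ i, ‖f i‖ = 1)
    (A : Set K) (hA : IsOpen A) (hAne : A.Nonempty) :
    ∃ g : Fin n → C(K, ℝ),
      (∀ i, ‖g i‖ = 1) ∧
      (∀ i, ∀ t ∉ A, g i t = f i t) ∧
      (∀ lam : Fin n → ℝ, ‖∑ i, lam i • g i‖ = ∑ i, |lam i|) := by
  classical
  have hKne : Nonempty K := ⟨hAne.choose⟩
  -- A is infinite
  have hAinf : A.Infinite := by
    intro hfin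
    obtain ⟨a, ha⟩ := hAne
    have h1 : IsClosed (A \ {a}) := (hfin.subset Set.diff_subset).isClosed
    have h2 : ({a} : Set K) = A ∩ (A \ {a})ᶜ := by
      ext t
      simp only [Set.mem_singleton_iff, Set.mem_inter_iff, Set.mem_compl_iff, Set.mem_diff,
        not_and, not_not]
      constructor
      · rintro rfl; exact ⟨ha, fun _ => rfl⟩
      · rintro ⟨htA, h⟩; exact h htA
    exact hK a (h2 ▸ hA.inter h1.isOpen_compl)
  set m := 2 ^ n with hm
  -- points
  let pe := Set.Infinite.natEmbedding A hAinf
  let p : ℕ → K := fun j => (pe j : K)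
  have hpA : ∀ j, p j ∈ A := fun j => (pe j).2
  have hpinj : Function.Injective p := fun a b h => pe.injective (Subtype.ext h)
  -- Urysohn functions
  let B : ℕ → Set K := fun j => p '' {k | k < m ∧ k ≠ j}
  have hBfin : ∀ j, (B j).Finite := fun j =>
    (Set.Finite.subset (Set.finite_Iio m) (fun k hk => hk.1)).image p
  have hclosed : ∀ j, IsClosed (Aᶜ ∪ B j) :=
    fun j => hA.isClosed_compl.union (hBfin j).isClosed
  have hdisj : ∀ j, Disjoint (Aᶜ ∪ B j) {p j} := by
    intro j
    rw [Set.disjoint_singleton_right]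
    rintro (h | ⟨k, ⟨-, hkj⟩, hk⟩)
    · exact h (hpA j)
    · exact hkj (hpinj hk)
  have hψex : ∀ j : ℕ, ∃ ψ : C(K, ℝ), Set.EqOn ψ 0 (Aᶜ ∪ B j) ∧ Set.EqOn ψ 1 {p j} ∧
      ∀ t, ψ t ∈ Set.Icc (0 : ℝ) 1 := fun j =>
    exists_continuous_zero_one_of_isClosed (hclosed j) isClosed_singleton (hdisj j)
  choose ψ hψ0 hψ1 hψmem using hψex
  have hψ01 : ∀ j t, 0 ≤ ψ j t ∧ ψ j t ≤ 1 := fun j t => ⟨(hψmem j t).1, (hψmem j t).2⟩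
  have hψA : ∀ j, ∀ t ∉ A, ψ j t = 0 := fun j t ht => hψ0 j (Or.inl ht)
  have hψpt : ∀ j, ψ j (p j) = 1 := fun j => hψ1 j rfl
  have hψother : ∀ j k, j < m → j ≠ k → ψ k (p j) = 0 := fun j k hj hjk =>
    hψ0 k (Or.inr ⟨j, ⟨hj, hjk⟩, rfl⟩)
  -- bump functions
  let φ : ℕ → C(K, ℝ) := fun j => ψ j * ∏ k ∈ Finset.range j, (1 - ψ k)
  have hφapp : ∀ j t, φ j t = ψ j t * ∏ k ∈ Finset.range j, (1 - ψ k t) := by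
    intro j t
    simp [φ]
  have hφ0 : ∀ j t, 0 ≤ φ j t := by
    intro j t
    rw [hφapp]
    exact mul_nonneg (hψ01 j t).1 (Finset.prod_nonneg fun k _ => by
      linarith [(hψ01 k t).2])
  have hSum : ∀ t, ∑ j ∈ Finset.range m, φ j t
      = 1 - ∏ j ∈ Finset.range m, (1 - ψ j t) := by
    intro t
    simp only [hφapp]
    exact telescope_aux (fun j => ψ j t) m
  have hS0 : ∀ t, 0 ≤ ∑ j ∈ Finset.range m, φ j t :=
    fun t => Finset.sum_nonneg fun j _ => hφ0 j t
  have hS1 : ∀ t, ∑ j ∈ Finset.range m, φ j t ≤ 1 := by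
    intro t
    rw [hSum]
    have : 0 ≤ ∏ j ∈ Finset.range m, (1 - ψ j t) :=
      Finset.prod_nonneg fun k _ => by linarith [(hψ01 k t).2]
    linarith
  have hφA : ∀ j, ∀ t ∉ A, φ j t = 0 := by
    intro j t ht; rw [hφapp, hψA j t ht, zero_mul]
  have hφself : ∀ j, j < m → φ j (p j) = 1 := by
    intro j hj
    rw [hφapp, hψpt]
    rw [Finset.prod_congr rfl (fun k hk => ?_), Finset.prod_const_one, mul_one]
    have hk' := Finset.mem_range.mp hk
    rw [hψother j k hj (by omega), sub_zero]
  have hφoff : ∀ j k, j < m → j ≠ k → φ k (p j) = 0 := by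
    intro j k hj hjk
    rw [hφapp, hψother j k hj hjk, zero_mul]
  have hSpt : ∀ j, j < m → ∑ k ∈ Finset.range m, φ k (p j) = 1 := by
    intro j hj
    rw [Finset.sum_eq_single j (fun k _ hkj => hφoff j k hj (Ne.symm hkj))
      (fun h => absurd (Finset.mem_range.mpr hj) h)]
    exact hφself j hj
  -- sign matrix
  have hcard : Fintype.card (Fin n → Bool) = m := by simp [hm]
  let e : (Fin n → Bool) ≃ Fin m := Fintype.equivFinOfCardEq hcard
  let d : ℕ → Fin n → Bool := fun j => if h : j < m then e.symm ⟨j, h⟩ else fun _ => true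
  let ε : Fin n → ℕ → ℝ := fun i j => if d j i then 1 else -1
  have hεabs : ∀ i j, |ε i j| = 1 := by
    intro i j
    simp only [ε]
    split <;> simp
  -- the functions g
  let g : Fin n → C(K, ℝ) := fun i =>
    f i * (1 - ∑ j ∈ Finset.range m, φ j) + ∑ j ∈ Finset.range m, ε i j • φ j
  have hgapp : ∀ i t, g i t = f i t * (1 - ∑ j ∈ Finset.range m, φ j t)
      + ∑ j ∈ Finset.range m, ε i j * φ j t := by
    intro i t
    simp [g]
  have hEval : ∀ (lam : Fin n → ℝ) (t : K), (∑ i, lam i • g i) t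
      = (∑ i, lam i * f i t) * (1 - ∑ j ∈ Finset.range m, φ j t)
        + ∑ j ∈ Finset.range m, (∑ i, lam i * ε i j) * φ j t := by
    intro lam t
    have h1 : (∑ i, lam i • g i) t = ∑ i, lam i * g i t := by simp
    have h2 : ∀ i : Fin n, lam i * g i t
        = lam i * f i t * (1 - ∑ j ∈ Finset.range m, φ j t)
          + ∑ j ∈ Finset.range m, lam i * ε i j * φ j t := by
      intro i
      rw [hgapp, mul_add, Finset.mul_sum]
      congr 1
      · ring
      · exact Finset.sum_congr rfl fun j _ => by ring
    rw [h1]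
    simp only [h2]
    rw [Finset.sum_add_distrib, ← Finset.sum_mul, Finset.sum_comm]
    congr 1
    exact Finset.sum_congr rfl fun j _ => by rw [Finset.sum_mul]
  -- upper bound
  have hUB : ∀ (lam : Fin n → ℝ) (t : K), |(∑ i, lam i • g i) t| ≤ ∑ i, |lam i| := by
    intro lam t
    rw [hEval]
    set S := ∑ j ∈ Finset.range m, φ j t with hS
    set L := ∑ i, |lam i| with hL
    have hS0' : 0 ≤ S := hS0 t
    have hS1' : S ≤ 1 := hS1 t
    have hL0 : 0 ≤ L := Finset.sum_nonneg fun i _ => abs_nonneg _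
    have h1 : |∑ i, lam i * f i t| ≤ L := by
      calc |∑ i, lam i * f i t| ≤ ∑ i, |lam i * f i t| := Finset.abs_sum_le_sum_abs _ _
        _ ≤ L := Finset.sum_le_sum fun i _ => by
            have hft : |f i t| ≤ 1 := by
              have := ContinuousMap.norm_coe_le_norm (f i) t
              rwa [hf i, Real.norm_eq_abs] at this
            rw [abs_mul]
            exact mul_le_of_le_one_right (abs_nonneg _) hft
    have h2 : ∀ j, |∑ i, lam i * ε i j| ≤ L := by
      intro j
      calc |∑ i, lam i * ε i j| ≤ ∑ i, |lam i * ε i j| := Finset.abs_sum_le_sum_abs _ _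
        _ = L := by
            refine Finset.sum_congr rfl fun i _ => ?_
            rw [abs_mul, hεabs, mul_one]
    have hterm1 : |(∑ i, lam i * f i t) * (1 - S)| ≤ L * (1 - S) := by
      rw [abs_mul, abs_of_nonneg (by linarith : (0:ℝ) ≤ 1 - S)]
      exact mul_le_mul_of_nonneg_right h1 (by linarith)
    have hterm2 : |∑ j ∈ Finset.range m, (∑ i, lam i * ε i j) * φ j t| ≤ L * S := by
      calc |∑ j ∈ Finset.range m, (∑ i, lam i * ε i j) * φ j t|
          ≤ ∑ j ∈ Finset.range m, |(∑ i, lam i * ε i j) * φ j t| :=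
            Finset.abs_sum_le_sum_abs _ _
        _ ≤ ∑ j ∈ Finset.range m, L * φ j t := Finset.sum_le_sum fun j _ => by
            rw [abs_mul, abs_of_nonneg (hφ0 j t)]
            exact mul_le_mul_of_nonneg_right (h2 j) (hφ0 j t)
        _ = L * S := by rw [← Finset.mul_sum]
    calc |(∑ i, lam i * f i t) * (1 - S) + ∑ j ∈ Finset.range m, (∑ i, lam i * ε i j) * φ j t|
        ≤ |(∑ i, lam i * f i t) * (1 - S)|
          + |∑ j ∈ Finset.range m, (∑ i, lam i * ε i j) * φ j t| := abs_add_le _ _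
      _ ≤ L * (1 - S) + L * S := add_le_add hterm1 hterm2
      _ = L := by ring
  -- lower bound: evaluation at a well-chosen point
  have hLB : ∀ lam : Fin n → ℝ, ∃ t : K, (∑ i, lam i • g i) t = ∑ i, |lam i| := by
    intro lam
    set σ : Fin n → Bool := fun i => decide (0 ≤ lam i) with hσ
    set j : ℕ := (e σ : ℕ) with hj
    have hjm : j < m := (e σ).2
    refine ⟨p j, ?_⟩
    have hd : d j = σ := by
      simp only [d, dif_pos hjm]
      have hfin : (⟨j, hjm⟩ : Fin m) = e σ := by
        ext
        rfl
      rw [hfin, Equiv.symm_apply_apply]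
    rw [hEval, hSpt j hjm, sub_self, mul_zero, zero_add]
    rw [Finset.sum_eq_single j (fun k _ hkj => by
        rw [hφoff j k hjm (Ne.symm hkj), mul_zero])
      (fun h => absurd (Finset.mem_range.mpr hjm) h)]
    rw [hφself j hjm, mul_one]
    refine Finset.sum_congr rfl fun i _ => ?_
    simp only [ε, hd, hσ]
    by_cases hli : 0 ≤ lam i
    · simp [hli, abs_of_nonneg hli]
    · simp [hli, abs_of_neg (lt_of_not_ge hli)]
  have hNorm : ∀ lam : Fin n → ℝ, ‖∑ i, lam i • g i‖ = ∑ i, |lam i| := by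
    intro lam
    obtain ⟨t, ht⟩ := hLB lam
    refine le_antisymm ?_ ?_
    · refine (ContinuousMap.norm_le _ (Finset.sum_nonneg fun i _ => abs_nonneg _)).mpr ?_
      intro x
      rw [Real.norm_eq_abs]
      exact hUB lam x
    · have h := ContinuousMap.norm_coe_le_norm (∑ i, lam i • g i) t
      rw [Real.norm_eq_abs, ht] at h
      exact le_trans (le_abs_self _) h
  have hgnorm : ∀ i, ‖g i‖ = 1 := by
    intro i
    have h := hNorm (Pi.single i (1:ℝ) : Fin n → ℝ)
    have h1 : ∑ k, (Pi.single i (1:ℝ) : Fin n → ℝ) k • g k = g i := by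
      rw [Finset.sum_eq_single i (fun k _ hk => by rw [Pi.single_eq_of_ne hk, zero_smul])
        (fun h => absurd (Finset.mem_univ i) h)]
      rw [Pi.single_eq_same, one_smul]
    have h2 : ∑ k, |(Pi.single i (1:ℝ) : Fin n → ℝ) k| = 1 := by
      simp [Pi.single_apply, apply_ite abs]
    rw [h1, h2] at h
    exact h
  have hgA : ∀ i, ∀ t ∉ A, g i t = f i t := by
    intro i t ht
    have h0 : ∀ j ∈ Finset.range m, φ j t = 0 := fun j _ => hφA j t ht
    rw [hgapp, Finset.sum_eq_zero h0,
      Finset.sum_eq_zero (fun j hj => by rw [h0 j hj, mul_zero])]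
    ring
  exact ⟨g, hgnorm, hgA, hNorm⟩
end

section
/- Let K be a compact Hausdorff topological space with no isolated point and let f₁,…,fₙ be norm-one elements of C(K). Then for every i ∈ {1,…,n} there exists a sequence (g_k^i)_{k∈ℕ} of norm-one elements of C(K) such that g_k^i converges weakly to fᵢ as k → ∞ for every i, and ‖Σⱼ₌₁ⁿ λⱼ g_k^j‖ = Σⱼ₌₁ⁿ |λⱼ| holds for all real scalars λ₁,…,λₙ and every k ∈ ℕ. -/
/-!
Take pairwise disjoint infinite open sets `V k` (the space is infinite since it has no isolated
points). Inside `V k`, put disjointly supported Urysohn bumps peaking at points `t ε`, one for each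
sign pattern `ε`, and modify the `fᵢ` inside `V k` so that they stay in the unit ball and take the
values `εᵢ` at `t ε`. Evaluating `∑ λᵢ gᵢ` at `t (sign ∘ λ)` gives the `ℓ₁` norm. The differences
`g_k^i - fᵢ` are bounded with disjoint supports, so every finite signed sum of them is bounded,
hence `∑ₖ |φ (g_k^i - fᵢ)| < ∞` for every functional `φ`, which gives weak convergence.
-/

open Filter Topology Set Function

section

variable {K : Type*} [TopologicalSpace K]

theorem infinite_of_forall_not_isOpen_singleton [T1Space K] [Nonempty K]
    (hK : ∀ t : K, ¬ IsOpen ({t} : Set K)) : Infinite K := by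
  by_contra hfin
  have : Finite K := not_infinite_iff_finite.1 hfin
  exact hK (Classical.arbitrary K) (isOpen_discrete _)

theorem exists_bumps_pairwise_disjoint_support [T4Space K] {ι : Type*} [Finite ι] {V : Set K}
    (hVo : IsOpen V) (hV : V.Infinite) :
    ∃ (t : ι → K) (u : ι → C(K, ℝ)), (∀ i x, u i x ∈ Icc 0 1) ∧ (∀ i, u i (t i) = 1) ∧
      (∀ i, support (u i) ⊆ V) ∧ Pairwise (Disjoint on fun i => support (u i)) := by
  obtain ⟨m, ⟨e⟩⟩ := Finite.exists_equiv_fin ι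
  let p : ι ↪ V := e.toEmbedding.trans (Fin.valEmbedding.trans (hV.natEmbedding _))
  have hp : Injective fun i => (p i : K) := Subtype.val_injective.comp p.injective
  obtain ⟨U, hU, hUd⟩ := (finite_range fun i => (p i : K)).t2_separation
  have hbump : ∀ i, ∃ u : C(K, ℝ), EqOn u 0 (U (p i) ∩ V)ᶜ ∧ EqOn u 1 {(p i : K)} ∧
      ∀ x, u x ∈ Icc 0 1 := fun i =>
    exists_continuous_zero_one_of_isClosed ((hU _).2.inter hVo).isClosed_compl isClosed_singleton
      (disjoint_singleton_right.2 (not_not.2 ⟨(hU _).1, (p i).2⟩))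
  choose u hu0 hu1 hu01 using hbump
  have hsupp : ∀ i, support (u i) ⊆ U (p i) ∩ V := fun i x hx => by_contra fun h => hx (hu0 i h)
  refine ⟨fun i => p i, u, hu01, fun i => hu1 i rfl,
    fun i => (hsupp i).trans inter_subset_right, fun i j hij => ?_⟩
  exact (hUd (mem_range_self i) (mem_range_self j) (hp.ne hij)).mono
    ((hsupp i).trans inter_subset_left) ((hsupp j).trans inter_subset_left)

variable [CompactSpace K]

namespace ContinuousMap

theorem norm_sum_le_of_pairwise_disjoint_support {E ι : Type*} [NormedAddCommGroup E]
    (h : ι → C(K, E)) (s : Finset ι) {C : ℝ} (hC0 : 0 ≤ C) (hC : ∀ k, ‖h k‖ ≤ C)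
    (hd : Pairwise (Disjoint on fun k => support (h k))) : ‖∑ k ∈ s, h k‖ ≤ C := by
  refine (norm_le _ hC0).2 fun x => ?_
  rw [sum_apply]
  by_cases hx : ∃ k ∈ s, h k x ≠ 0
  · obtain ⟨k, hk, hkx⟩ := hx
    rw [Finset.sum_eq_single_of_mem k hk fun j _ hjk => ?_]
    · exact ((h k).norm_coe_le_norm x).trans (hC k)
    · by_contra hjx
      exact disjoint_left.1 (hd hjk) hjx hkx
  · push Not at hx
    rw [Finset.sum_eq_zero hx, norm_zero]
    exact hC0

theorem tendsto_apply_zero_of_pairwise_disjoint_support {E : Type*} [NormedAddCommGroup E]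
    [NormedSpace ℝ E] (h : ℕ → C(K, E)) {C : ℝ} (hC : ∀ k, ‖h k‖ ≤ C)
    (hd : Pairwise (Disjoint on fun k => support (h k))) (φ : C(K, E) →L[ℝ] ℝ) :
    Tendsto (fun k => φ (h k)) atTop (𝓝 0) := by
  have hC0 : 0 ≤ C := (norm_nonneg _).trans (hC 0)
  have hpartial : ∀ m, ∑ k ∈ Finset.range m, |φ (h k)| ≤ ‖φ‖ * C := by
    intro m
    -- Aligning the signs turns `∑ |φ (h k)|` into `φ` of a function of norm at most `C`.
    let h' : ℕ → C(K, E) := fun k => (SignType.sign (φ (h k)) : ℝ) • h k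
    have hd' : Pairwise (Disjoint on fun k => support (h' k)) := fun j k hjk =>
      (hd hjk).mono (support_const_smul_subset _ _) (support_const_smul_subset _ _)
    have hC' : ∀ k, ‖h' k‖ ≤ C := fun k => by
      refine (norm_smul_le _ _).trans ((mul_le_of_le_one_left (norm_nonneg _) ?_).trans (hC k))
      rcases SignType.sign (φ (h k)) with _ | _ | _ <;> simp
    calc ∑ k ∈ Finset.range m, |φ (h k)| = φ (∑ k ∈ Finset.range m, h' k) := by
          simp [h', map_sum, sign_mul_self]
      _ ≤ ‖φ‖ * ‖∑ k ∈ Finset.range m, h' k‖ := (le_abs_self _).trans (φ.le_opNorm _)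
      _ ≤ ‖φ‖ * C := by
          gcongr
          exact norm_sum_le_of_pairwise_disjoint_support h' _ hC0 hC' hd'
  exact (summable_of_sum_range_le (fun _ => abs_nonneg _) hpartial).of_abs.tendsto_atTop_zero

end ContinuousMap

theorem exists_perturbation_eq_at_points [T2Space K] {ι σ : Type*} [Fintype σ]
    (f : ι → C(K, ℝ)) (hf : ∀ i, ‖f i‖ ≤ 1) (b : σ → ι → ℝ) (hb : ∀ s i, |b s i| ≤ 1)
    {V : Set K} (hVo : IsOpen V) (hV : V.Infinite) :
    ∃ g : ι → C(K, ℝ), (∀ i, ‖g i‖ ≤ 1) ∧ (∀ i, support (g i - f i) ⊆ V) ∧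
      ∀ s, ∃ x, ∀ i, g i x = b s i := by
  obtain ⟨t, u, hu01, hut, huV, hud⟩ := exists_bumps_pairwise_disjoint_support (ι := σ) hVo hV
  have hu_norm : ∀ s, ‖u s‖ ≤ 1 := fun s =>
    (ContinuousMap.norm_le _ zero_le_one).2 fun x => by
      rw [Real.norm_of_nonneg (hu01 s x).1]; exact (hu01 s x).2
  have hsum : ∀ x, ∑ s, u s x ≤ 1 := fun x => by
    have := ContinuousMap.norm_sum_le_of_pairwise_disjoint_support u Finset.univ zero_le_one
      hu_norm hud
    rw [← ContinuousMap.sum_apply]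
    exact (le_abs_self _).trans (((∑ s, u s).norm_coe_le_norm x).trans this)
  have hut' : ∀ s s', s ≠ s' → u s (t s') = 0 := fun s s' hss' => by
    by_contra h
    exact disjoint_left.1 (hud hss') h (by simp [hut])
  let g : ι → C(K, ℝ) := fun i => f i + ∑ s, u s * (ContinuousMap.const K (b s i) - f i)
  have hg : ∀ i x, g i x = (1 - ∑ s, u s x) * f i x + ∑ s, u s x * b s i := fun i x => by
    simp only [g, ContinuousMap.add_apply, ContinuousMap.sum_apply, ContinuousMap.mul_apply,
      ContinuousMap.sub_apply, ContinuousMap.const_apply, mul_sub, Finset.sum_sub_distrib,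
      ← Finset.sum_mul]
    ring
  refine ⟨g, fun i => (ContinuousMap.norm_le _ zero_le_one).2 fun x => ?_, fun i x hx => ?_,
    fun s => ⟨t s, fun i => ?_⟩⟩
  · -- `g i x` is a convex combination of `f i x` and the `b s i`.
    have hfx : |f i x| ≤ 1 := by simpa using ((f i).norm_coe_le_norm x).trans (hf i)
    rw [Real.norm_eq_abs, hg]
    calc |(1 - ∑ s, u s x) * f i x + ∑ s, u s x * b s i|
        ≤ (1 - ∑ s, u s x) * |f i x| + ∑ s, u s x * |b s i| := by
          refine (abs_add_le _ _).trans (add_le_add ?_ ?_)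
          · rw [abs_mul, abs_of_nonneg (sub_nonneg.2 (hsum x))]
          · refine (Finset.abs_sum_le_sum_abs _ _).trans_eq (Finset.sum_congr rfl fun s _ => ?_)
            rw [abs_mul, abs_of_nonneg (hu01 s x).1]
      _ ≤ (1 - ∑ s, u s x) * 1 + ∑ s, u s x * 1 := by
          gcongr with s
          · linarith [hsum x]
          · exact (hu01 s x).1
          · exact hb s i
      _ = 1 := by simp only [mul_one, sub_add_cancel]
  · by_contra hxV
    refine hx ?_
    have hu0 : ∀ s, u s x = 0 := fun s => notMem_support.1 fun h => hxV (huV s h)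
    simp [g, hu0]
  · rw [hg, Fintype.sum_eq_single s, Fintype.sum_eq_single s, hut]
    · ring
    all_goals intro s' hs'; simp [hut' s' s hs']

theorem norm_sum_smul_eq_sum_abs_of_forall_sign_pattern {ι : Type*} [Fintype ι] (g : ι → C(K, ℝ))
    (hg : ∀ i, ‖g i‖ ≤ 1) (hsign : ∀ ε : ι → SignType, ∃ x, ∀ i, g i x = ε i) (lam : ι → ℝ) :
    ‖∑ i, lam i • g i‖ = ∑ i, |lam i| := by
  refine le_antisymm ((norm_sum_le _ _).trans (Finset.sum_le_sum fun i _ => ?_)) ?_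
  · rw [norm_smul, Real.norm_eq_abs]
    exact mul_le_of_le_one_right (abs_nonneg _) (hg i)
  · obtain ⟨x, hx⟩ := hsign fun i => SignType.sign (lam i)
    calc ∑ i, |lam i| = (∑ i, lam i • g i) x := by simp [ContinuousMap.sum_apply, hx]
      _ ≤ ‖∑ i, lam i • g i‖ := (le_abs_self _).trans ((∑ i, lam i • g i).norm_coe_le_norm x)

end

/-- Let `K` be a compact Hausdorff space with no isolated points and `f₁,…,fₙ` norm-one
elements of `C(K)`. Then there are sequences `(gₖ^i)ₖ` of norm-one elements of `C(K)` such
that `gₖ^i → fᵢ` weakly for every `i`, and for every `k` the functions `gₖ^1,…,gₖ^n` are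
isometrically equivalent to the canonical basis of `ℓ₁ⁿ`. -/
theorem stmt_7 {K : Type*} [TopologicalSpace K] [CompactSpace K] [T2Space K]
    (hK : ∀ t : K, ¬ IsOpen ({t} : Set K))
    (n : ℕ) (f : Fin n → C(K, ℝ)) (hf : ∀ i, ‖f i‖ = 1) :
    ∃ g : ℕ → Fin n → C(K, ℝ),
      (∀ k i, ‖g k i‖ = 1) ∧
      (∀ i, ∀ φ : C(K, ℝ) →L[ℝ] ℝ,
        Tendsto (fun k => φ (g k i)) atTop (𝓝 (φ (f i)))) ∧
      (∀ k, ∀ lam : Fin n → ℝ, ‖∑ i, lam i • g k i‖ = ∑ i, |lam i|) := by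
  rcases isEmpty_or_nonempty K with _ | _
  · have : IsEmpty (Fin n) := ⟨fun i => by simpa [Subsingleton.elim (f i) 0] using hf i⟩
    exact ⟨fun _ => f, fun _ => isEmptyElim, isEmptyElim, fun _ _ => by simp⟩
  have := infinite_of_forall_not_isOpen_singleton hK
  obtain ⟨V, hVinf, hVo, hVd⟩ := exists_seq_infinite_isOpen_pairwise_disjoint K
  choose g hg1 hgV hgsign using fun k =>
    exists_perturbation_eq_at_points f (fun i => (hf i).le) (fun (ε : Fin n → SignType) i => ε i)
      (fun ε i => by rcases ε i with _ | _ | _ <;> simp) (hVo k) (hVinf k)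
  have hl1 := fun k => norm_sum_smul_eq_sum_abs_of_forall_sign_pattern (g k) (hg1 k) (hgsign k)
  refine ⟨g, fun k i => by simpa [Pi.single_apply, apply_ite] using hl1 k (Pi.single i 1),
    fun i φ => ?_, hl1⟩
  have hnull := ContinuousMap.tendsto_apply_zero_of_pairwise_disjoint_support
    (fun k => g k i - f i) (fun k => (norm_sub_le _ _).trans (add_le_add (hg1 k i) (hf i).le))
    (fun j k hjk => (hVd hjk).mono (hgV j i) (hgV k i)) φ
  simpa using hnull.const_add (φ (f i))
end

section
/- Let X be a Banach space and let x ∈ S_X be a Daugavet point. Then for every ε > 0 and every slice S(B_X, x*, α) of B_X there exists a slice S(B_X, x₀*, α₀) such that S(B_X, x₀*, α₀) ⊆ S(B_X, x*, α) and ‖x + y‖ ≥ 2 − ε for every y ∈ S(B_X, x₀*, α₀). -/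
open Filter Topology

section Defs

variable {E : Type*} [NormedAddCommGroup E] [NormedSpace ℝ E]

/-- A ballSlice of the closed unit ball of `E` determined by `f ∈ E*` and `α > 0`. -/
def ballSlice (f : E →L[ℝ] ℝ) (α : ℝ) : Set E :=
  {x | ‖x‖ ≤ 1 ∧ ‖f‖ - α < f x}

/-- `x` is a Daugavet point. -/
def DaugavetPoint (x : E) : Prop :=
  ∀ (f : E →L[ℝ] ℝ) (α ε : ℝ), 0 < α → 0 < ε →
    ∃ y ∈ ballSlice f α, 2 - ε ≤ ‖x - y‖

/-- `x` is a Δ-point. -/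
def DeltaPoint (x : E) : Prop :=
  ∀ (ε : ℝ), 0 < ε → ∀ (f : E →L[ℝ] ℝ) (α : ℝ), 0 < α → x ∈ ballSlice f α →
    ∃ y ∈ ballSlice f α, 2 - ε ≤ ‖x - y‖

/-- The Daugavet property (geometric characterization). -/
def DaugavetProp (E : Type*) [NormedAddCommGroup E] [NormedSpace ℝ E] : Prop :=
  ∀ x : E, ‖x‖ = 1 → ∀ (f : E →L[ℝ] ℝ) (α ε : ℝ), 0 < α → 0 < ε →
    ∃ y ∈ ballSlice f α, 2 - ε < ‖x + y‖

/-- The weak operator Daugavet property. -/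
def WODP (E : Type*) [NormedAddCommGroup E] [NormedSpace ℝ E] : Prop :=
  ∀ (ε : ℝ), 0 < ε → ∀ (n : ℕ) (xs : Fin n → E), (∀ i, ‖xs i‖ = 1) →
    ∀ (f : E →L[ℝ] ℝ) (α : ℝ), 0 < α → ∀ x' : E, ‖x'‖ ≤ 1 →
      ∃ x ∈ ballSlice f α, ∃ T : E →L[ℝ] E,
        ‖T‖ ≤ 1 + ε ∧ (∀ i, ‖T (xs i) - xs i‖ < ε) ∧ ‖T x - x'‖ < ε

/-- `y` is a strongly exposed point of the closed unit ball of `E`. -/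
def StronglyExposedUnitBall (y : E) : Prop :=
  ‖y‖ ≤ 1 ∧ ∃ f : E →L[ℝ] ℝ, ‖f‖ = 1 ∧ f y = 1 ∧
    ∀ yn : ℕ → E, (∀ n, ‖yn n‖ ≤ 1) →
      Tendsto (fun n => f (yn n)) atTop (𝓝 1) → Tendsto yn atTop (𝓝 y)

/-- `y` is a strongly exposed point of the set `C`. -/
def StronglyExposedIn (C : Set E) (y : E) : Prop :=
  y ∈ C ∧ ∃ f : E →L[ℝ] ℝ, (∀ z ∈ C, f z ≤ f y) ∧
    ∀ yn : ℕ → E, (∀ n, yn n ∈ C) →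
      Tendsto (fun n => f (yn n)) atTop (𝓝 (f y)) → Tendsto yn atTop (𝓝 y)

/-- The Radon–Nikodým property in its geometric form: every nonempty closed bounded convex
set is the closed convex hull of its strongly exposed points. -/
def RNP (E : Type*) [NormedAddCommGroup E] [NormedSpace ℝ E] : Prop :=
  ∀ C : Set E, C.Nonempty → IsClosed C → Bornology.IsBounded C → Convex ℝ C →
    C = closure (convexHull ℝ {y | StronglyExposedIn C y})

/-- `y` is a denting point of the closed unit ball. -/
def DentingPoint (y : E) : Prop :=
  ∀ ε : ℝ, 0 < ε → ∃ (f : E →L[ℝ] ℝ) (α : ℝ), 0 < α ∧ y ∈ ballSlice f α ∧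
    Metric.diam (ballSlice f α) < ε

/-- `Z`, together with the bilinear map `m : X → Y → Z`, is (a realization of) the projective
tensor product `X ⊗̂π Y`: the span of elementary tensors is dense and the norm of any element
of that span is given by the projective tensor norm. -/
structure IsProjTensor {X Y Z : Type*} [NormedAddCommGroup X] [NormedSpace ℝ X]
    [NormedAddCommGroup Y] [NormedSpace ℝ Y] [NormedAddCommGroup Z] [NormedSpace ℝ Z]
    (m : X →ₗ[ℝ] Y →ₗ[ℝ] Z) : Prop where
  dense_span : Dense (Submodule.span ℝ (Set.range fun p : X × Y => m p.1 p.2) : Set Z)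
  norm_eq : ∀ (n : ℕ) (x : Fin n → X) (y : Fin n → Y),
    ‖∑ i, m (x i) (y i)‖ = sInf {r : ℝ | ∃ (k : ℕ) (u : Fin k → X) (v : Fin k → Y),
      (∑ i, m (u i) (v i) = ∑ i, m (x i) (y i)) ∧ r = ∑ i, ‖u i‖ * ‖v i‖}

end Defs

/-! Pick `z` in the slice `S(f, δ)` with `‖x + z‖ ≥ 2 - δ` and `g` with `‖g‖ ≤ 1` norming `x + z`;
then `g x` and `g z` are both `≥ 1 - δ`. On the slice `S(f + g, δ)`, which contains `z`, both `f` and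
`g` are almost maximal, so it lies in `S(f, 3δ)` and `‖x + w‖ ≥ g x + g w > 2 - 4δ` on it. -/

section DaugavetSlice

variable {E : Type*} [NormedAddCommGroup E] [NormedSpace ℝ E]

namespace ContinuousLinearMap

theorem apply_le_opNorm_of_norm_le_one (f : E →L[ℝ] ℝ) {w : E} (hw : ‖w‖ ≤ 1) : f w ≤ ‖f‖ :=
  (le_abs_self _).trans <| (f.le_opNorm_of_le hw).trans_eq (mul_one _)

theorem apply_le_norm_of_opNorm_le_one {g : E →L[ℝ] ℝ} (hg : ‖g‖ ≤ 1) (w : E) : g w ≤ ‖w‖ :=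
  (le_abs_self _).trans <| (g.le_opNorm w).trans (mul_le_of_le_one_left (norm_nonneg w) hg)

end ContinuousLinearMap

theorem DaugavetPoint.exists_mem_ballSlice_two_sub_le_norm_add {x : E} (hx : DaugavetPoint x)
    (f : E →L[ℝ] ℝ) {α ε : ℝ} (hα : 0 < α) (hε : 0 < ε) :
    ∃ z ∈ ballSlice f α, 2 - ε ≤ ‖x + z‖ := by
  obtain ⟨y, ⟨hy, hfy⟩, hxy⟩ := hx (-f) α ε hα hε
  refine ⟨-y, ⟨by rwa [norm_neg], ?_⟩, by rwa [← sub_eq_add_neg]⟩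
  simpa only [norm_neg, map_neg, neg_apply] using hfy

theorem sub_le_apply_of_two_sub_le_norm_add {g : E →L[ℝ] ℝ} (hg : ‖g‖ ≤ 1) {x z : E}
    (hgxz : g (x + z) = ‖x + z‖) (hz : ‖z‖ ≤ 1) {δ : ℝ} (hxz : 2 - δ ≤ ‖x + z‖) :
    1 - δ ≤ g x := by
  have hgz : g z ≤ 1 := (g.apply_le_norm_of_opNorm_le_one hg z).trans hz
  rw [map_add] at hgxz
  linarith

theorem lt_apply_of_mem_ballSlice_add {f g : E →L[ℝ] ℝ} (hg : ‖g‖ ≤ 1) {z w : E} {δ : ℝ}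
    (hz : z ∈ ballSlice f δ) (hgz : 1 - δ ≤ g z) (hw : w ∈ ballSlice (f + g) δ) :
    ‖f‖ - 3 * δ < f w ∧ 1 - 3 * δ < g w := by
  obtain ⟨hz, hfz⟩ := hz
  obtain ⟨hw, hfgw⟩ := hw
  have hfg : (f + g) z ≤ ‖f + g‖ := (f + g).apply_le_opNorm_of_norm_le_one hz
  have hfw : f w ≤ ‖f‖ := f.apply_le_opNorm_of_norm_le_one hw
  have hgw : g w ≤ 1 := (g.apply_le_norm_of_opNorm_le_one hg w).trans hw
  rw [add_apply] at hfg hfgw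
  constructor <;> linarith

end DaugavetSlice

theorem stmt_10_general {X : Type*} [NormedAddCommGroup X] [NormedSpace ℝ X]
    (x : X) (hx : ‖x‖ = 1) (hxD : DaugavetPoint x)
    (ε : ℝ) (hε : 0 < ε) (f : X →L[ℝ] ℝ) (α : ℝ) (hα : 0 < α) :
    ∃ (f₀ : X →L[ℝ] ℝ) (α₀ : ℝ), 0 < α₀ ∧
      ballSlice f₀ α₀ ⊆ ballSlice f α ∧
      ∀ y ∈ ballSlice f₀ α₀, 2 - ε ≤ ‖x + y‖ := by
  set δ := min (ε / 4) (α / 3)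
  have hδ : 0 < δ := lt_min (by positivity) (by positivity)
  have hδε : δ ≤ ε / 4 := min_le_left _ _
  have hδα : δ ≤ α / 3 := min_le_right _ _
  obtain ⟨z, hz, hxz⟩ := hxD.exists_mem_ballSlice_two_sub_le_norm_add f hδ hδ
  obtain ⟨g, hg, hgxz⟩ := exists_dual_vector'' ℝ (x + z)
  have hgx : 1 - δ ≤ g x := sub_le_apply_of_two_sub_le_norm_add hg hgxz hz.1 hxz
  have hgz : 1 - δ ≤ g z := by
    rw [add_comm] at hgxz hxz
    exact sub_le_apply_of_two_sub_le_norm_add hg hgxz hx.le hxz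
  refine ⟨f + g, δ, hδ, fun w hw => ⟨hw.1, ?_⟩, fun w hw => ?_⟩
  · linarith [(lt_apply_of_mem_ballSlice_add hg hz hgz hw).1]
  · have hgw := (lt_apply_of_mem_ballSlice_add hg hz hgz hw).2
    have hgxw : g (x + w) ≤ ‖x + w‖ := g.apply_le_norm_of_opNorm_le_one hg (x + w)
    rw [map_add] at hgxw
    linarith

/-- If `x ∈ S_X` is a Daugavet point, then for every `ε > 0` and every slice `S(B_X, x*, α)`
there is a slice `S(B_X, x₀*, α₀)` contained in it on which `‖x + y‖ ≥ 2 − ε` holds for every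
point `y`. -/
theorem stmt_10 {X : Type*} [NormedAddCommGroup X] [NormedSpace ℝ X] [CompleteSpace X]
    (x : X) (hx : ‖x‖ = 1) (hxD : DaugavetPoint x)
    (ε : ℝ) (hε : 0 < ε) (f : X →L[ℝ] ℝ) (α : ℝ) (hα : 0 < α) :
    ∃ (f₀ : X →L[ℝ] ℝ) (α₀ : ℝ), 0 < α₀ ∧
      ballSlice f₀ α₀ ⊆ ballSlice f α ∧
      ∀ y ∈ ballSlice f₀ α₀, 2 - ε ≤ ‖x + y‖ :=
  stmt_10_general x hx hxD ε hε f α hα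
end
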